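/- arXiv:1902.02258 — 2 statements merged into one kernel-verified Lean document; each statement's English description precedes it below -/
import Mathlib

section
/- Let (Z_{kl})_{1≤k,l≤M} be mutually independent complex-valued square-integrable random variables with E[Z_{kl}] = 0 and E[|Z_{kl}|²] = 1/M for all k,l. Let K = {k_1<…<k_n}, L = {l_1<…<l_n}, K' = {k'_1<…<k'_m}, L' = {l'_1<…<l'_m} be subsets of {1,…,M}. Then E[per Z(K|L) · conj(per Z(K'|L'))] = n!/M^n if n = m, K = K' and L = L', and E[per Z(K|L) · conj(per Z(K'|L'))] = 0 otherwise. -/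
/-!
Expanding both permanents, `E[per Z(K|L) · conj per Z(K'|L')]` becomes a double sum over
bijections `e : K ≃ L`, `f : K' ≃ L'` of `E[∏_{p ∈ Γ e} Z_p · conj ∏_{p ∈ Γ f} Z_p]`, where `Γ e`
is the graph of `e`, a set of matrix positions. By independence this expectation factors over
the positions: one lying in exactly one of the two graphs contributes `E Z_p = 0` (or its
conjugate), one lying in both contributes `E|Z_p|² = 1/M`. So a term is `M⁻ⁿ` if `Γ e = Γ f` and
`0` otherwise; as a graph determines the domain, the codomain and the bijection, only the `n!`
diagonal terms with `K = K'`, `L = L'`, `e = f` survive.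
-/

open Finset MeasureTheory ProbabilityTheory ComplexConjugate

/-- `per A(K|L)`, written as a sum over the bijections `K ≃ L`; it is `1` for `K = L = ∅`. -/
noncomputable def permOn {α β : Type*} [DecidableEq α] [DecidableEq β]
    (A : α → β → ℂ) (K : Finset α) (L : Finset β) : ℂ :=
  ∑ e : {x // x ∈ K} ≃ {y // y ∈ L}, ∏ k : {x // x ∈ K}, A k (e k)

namespace ProbabilityTheory

variable {Ω ι 𝕜 : Type*} [MeasurableSpace Ω] {μ : Measure Ω} [Fintype ι] [RCLike 𝕜]
  {𝓧 : ι → Type*} {m𝓧 : ∀ i, MeasurableSpace (𝓧 i)} {X : (i : ι) → Ω → 𝓧 i}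
  {f : (i : ι) → 𝓧 i → 𝕜}

lemma iIndepFun.integrable_fun_prod_comp (hX : iIndepFun X μ)
    (mX : ∀ i, AEMeasurable (X i) μ) (hf : ∀ i, Integrable (f i) (μ.map (X i))) :
    Integrable (fun ω ↦ ∏ i, f i (X i ω)) μ := by
  have := hX.isProbabilityMeasure
  have h := Integrable.fintype_prod_dep hf
  rw [← hX.map_fun_eq_pi_map mX] at h
  exact h.comp_aemeasurable (aemeasurable_pi_lambda _ mX)

end ProbabilityTheory

section Moments

variable {Ω ι : Type*} [MeasurableSpace Ω] {μ : Measure Ω} [DecidableEq ι]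

def mulConjFactor (A B : Finset ι) (i : ι) (z : ℂ) : ℂ :=
  (if i ∈ A then z else 1) * (if i ∈ B then conj z else 1)

lemma prod_mul_conj_prod_eq_prod_mulConjFactor [Fintype ι] (A B : Finset ι) (x : ι → ℂ) :
    (∏ i ∈ A, x i) * conj (∏ i ∈ B, x i) = ∏ i, mulConjFactor A B i (x i) := by
  simp only [mulConjFactor, prod_mul_distrib, map_prod, Fintype.prod_ite_mem]

lemma continuous_mulConjFactor (A B : Finset ι) (i : ι) : Continuous (mulConjFactor A B i) := by
  unfold mulConjFactor
  split_ifs <;> fun_prop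

lemma integrable_mulConjFactor [IsProbabilityMeasure μ] {Y : Ω → ℂ} (hY : MemLp Y 2 μ)
    (A B : Finset ι) (i : ι) : Integrable (fun ω ↦ mulConjFactor A B i (Y ω)) μ := by
  have hL2 : ∀ (p : Prop) [Decidable p] (W : Ω → ℂ), MemLp W 2 μ →
      MemLp (fun ω ↦ if p then W ω else 1) 2 μ := fun p _ W hW ↦ by
    split_ifs
    exacts [hW, memLp_const 1]
  exact (hL2 _ Y hY).integrable_mul (hL2 _ _ hY.star)

lemma integral_mulConjFactor [IsProbabilityMeasure μ] {Y : Ω → ℂ} {v : ℝ}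
    (hmean : ∫ ω, Y ω ∂μ = 0) (hvar : ∫ ω, ‖Y ω‖ ^ 2 ∂μ = v) (A B : Finset ι) (i : ι) :
    ∫ ω, mulConjFactor A B i (Y ω) ∂μ =
      if i ∈ A then (if i ∈ B then (v : ℂ) else 0) else (if i ∈ B then 0 else 1) := by
  by_cases hA : i ∈ A <;> by_cases hB : i ∈ B <;>
    simp only [mulConjFactor, hA, hB, if_true, if_false, mul_one, one_mul]
  · simp_rw [RCLike.mul_conj, ← hvar]
    norm_cast
  · exact hmean
  · rw [integral_conj, hmean, map_zero]
  · simp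

lemma prod_ite_mem_ite_mem {M : Type*} [CommMonoidWithZero M] [Fintype ι] (A B : Finset ι)
    (c : M) :
    ∏ i, (if i ∈ A then (if i ∈ B then c else 0) else (if i ∈ B then 0 else 1)) =
      if A = B then c ^ #A else 0 := by
  split_ifs with hAB
  · subst hAB
    have h : ∀ i, (if i ∈ A then (if i ∈ A then c else 0) else (if i ∈ A then 0 else 1)) =
        if i ∈ A then c else 1 := fun i ↦ by split_ifs <;> rfl
    simp only [h, Fintype.prod_ite_mem, prod_const]
  · obtain ⟨i, hi⟩ : ∃ i, ¬(i ∈ A ↔ i ∈ B) := by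
      by_contra! h
      exact hAB (Finset.ext h)
    exact prod_eq_zero (mem_univ i) (by by_cases hA : i ∈ A <;> simp_all)

variable [Fintype ι] {X : ι → Ω → ℂ}

lemma integrable_prod_mul_conj_prod (hX : iIndepFun X μ) (hL2 : ∀ i, MemLp (X i) 2 μ)
    (A B : Finset ι) :
    Integrable (fun ω ↦ (∏ i ∈ A, X i ω) * conj (∏ i ∈ B, X i ω)) μ := by
  have := hX.isProbabilityMeasure
  simp_rw [prod_mul_conj_prod_eq_prod_mulConjFactor]
  refine hX.integrable_fun_prod_comp (fun i ↦ (hL2 i).aemeasurable) fun i ↦ ?_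
  exact (integrable_map_measure (continuous_mulConjFactor A B i).aestronglyMeasurable
    (hL2 i).aemeasurable).2 (integrable_mulConjFactor (hL2 i) A B i)

lemma integral_prod_mul_conj_prod (hX : iIndepFun X μ) (hL2 : ∀ i, MemLp (X i) 2 μ)
    (hmean : ∀ i, ∫ ω, X i ω ∂μ = 0) {v : ℝ} (hvar : ∀ i, ∫ ω, ‖X i ω‖ ^ 2 ∂μ = v)
    (A B : Finset ι) :
    ∫ ω, (∏ i ∈ A, X i ω) * conj (∏ i ∈ B, X i ω) ∂μ = if A = B then (v : ℂ) ^ #A else 0 := by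
  have := hX.isProbabilityMeasure
  simp_rw [prod_mul_conj_prod_eq_prod_mulConjFactor]
  rw [hX.integral_fun_prod_comp (fun i ↦ (hL2 i).aemeasurable)
    fun i ↦ (continuous_mulConjFactor A B i).aestronglyMeasurable]
  simp only [integral_mulConjFactor (hmean _) (hvar _), prod_ite_mem_ite_mem]

end Moments

section Graph

variable {α β : Type*} {K : Finset α} {L : Finset β}

def graphFinset (e : K ≃ L) : Finset (α × β) :=
  (univ : Finset K).map
    ⟨fun k : K ↦ ((k : α), (e k : β)), fun _ _ h ↦ Subtype.ext (congrArg Prod.fst h)⟩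

lemma mem_graphFinset {e : K ≃ L} {p : α × β} :
    p ∈ graphFinset e ↔ ∃ k : K, ((k : α), (e k : β)) = p := by
  simp only [graphFinset, mem_map, mem_univ, true_and]
  rfl

lemma prod_graphFinset {R : Type*} [CommMonoid R] (e : K ≃ L) (g : α → β → R) :
    ∏ p ∈ graphFinset e, g p.1 p.2 = ∏ k : K, g k (e k) :=
  prod_map _ _ _

lemma card_graphFinset (e : K ≃ L) : #(graphFinset e) = #K := by
  simp [graphFinset]

lemma image_fst_graphFinset [DecidableEq α] (e : K ≃ L) :
    (graphFinset e).image Prod.fst = K := by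
  ext a
  simp [mem_graphFinset]

lemma image_snd_graphFinset [DecidableEq β] (e : K ≃ L) :
    (graphFinset e).image Prod.snd = L := by
  ext b
  simp only [mem_image, mem_graphFinset]
  constructor
  · rintro ⟨_, ⟨k, rfl⟩, rfl⟩
    exact (e k).2
  · intro hb
    exact ⟨_, ⟨e.symm ⟨b, hb⟩, rfl⟩, by simp⟩

lemma graphFinset_injective : Function.Injective (graphFinset : (K ≃ L) → Finset (α × β)) := by
  intro e f h
  ext k
  obtain ⟨k', hk'⟩ := mem_graphFinset.1 (h ▸ mem_graphFinset.2 ⟨k, rfl⟩ : _ ∈ graphFinset f)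
  obtain rfl : k' = k := Subtype.ext (congrArg Prod.fst hk')
  exact (congrArg Prod.snd hk').symm

end Graph

section Permanent

variable {α β : Type*} [DecidableEq α] [DecidableEq β]

lemma permOn_mul_conj_permOn (A : α → β → ℂ) (K K' : Finset α) (L L' : Finset β) :
    permOn A K L * conj (permOn A K' L') = ∑ e : K ≃ L, ∑ f : K' ≃ L',
      (∏ p ∈ graphFinset e, A p.1 p.2) * conj (∏ p ∈ graphFinset f, A p.1 p.2) := by
  simp only [permOn, prod_graphFinset, map_sum, sum_mul_sum]

lemma sum_sum_ite_graphFinset_eq {R : Type*} [Semiring R] {K K' : Finset α} {L L' : Finset β}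
    (hKL : #K = #L) (c : R) :
    ∑ e : K ≃ L, ∑ f : K' ≃ L', (if graphFinset e = graphFinset f then c else 0) =
      if K = K' ∧ L = L' then ((#K).factorial : R) * c else 0 := by
  split_ifs with h
  · obtain ⟨rfl, rfl⟩ := h
    have hcard : Fintype.card (K ≃ L) = (#K).factorial := by
      rw [Fintype.card_equiv (Fintype.equivOfCardEq (by simpa using hKL)), Fintype.card_coe]
    simp only [graphFinset_injective.eq_iff, sum_ite_eq, mem_univ, if_true, sum_const, card_univ,
      hcard, nsmul_eq_mul]
  · refine sum_eq_zero fun e _ ↦ sum_eq_zero fun f _ ↦ if_neg fun hef ↦ h ⟨?_, ?_⟩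
    · rw [← image_fst_graphFinset e, hef, image_fst_graphFinset]
    · rw [← image_snd_graphFinset e, hef, image_snd_graphFinset]

end Permanent

theorem expectation_permanent_product_general
    {Ω : Type*} [MeasurableSpace Ω] (μ : Measure Ω)
    (M : ℕ) (Z : Fin M → Fin M → Ω → ℂ)
    (hindep : iIndepFun
      (fun p : Fin M × Fin M => Z p.1 p.2) μ)
    (hL2 : ∀ k l, MemLp (Z k l) 2 μ)
    (hmean : ∀ k l, ∫ ω, Z k l ω ∂μ = 0)
    (hvar : ∀ k l, ∫ ω, ‖Z k l ω‖ ^ 2 ∂μ = 1 / (M : ℝ))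
    (n m : ℕ) (K L K' L' : Finset (Fin M))
    (hK : K.card = n) (hL : L.card = n) (hK' : K'.card = m) :
    ∫ ω, permOn (fun k l => Z k l ω) K L *
        (starRingEnd ℂ) (permOn (fun k l => Z k l ω) K' L') ∂μ =
      if n = m ∧ K = K' ∧ L = L' then (n.factorial : ℂ) / (M : ℂ) ^ n else 0 := by
  have hL2' : ∀ p : Fin M × Fin M, MemLp (Z p.1 p.2) 2 μ := fun p ↦ hL2 p.1 p.2
  have hint (A B : Finset (Fin M × Fin M)) :=
    integrable_prod_mul_conj_prod hindep hL2' A B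
  have hcond : K = K' ∧ L = L' ↔ n = m ∧ K = K' ∧ L = L' :=
    ⟨fun h ↦ ⟨hK ▸ hK' ▸ congrArg card h.1, h⟩, And.right⟩
  calc ∫ ω, permOn (fun k l => Z k l ω) K L *
        (starRingEnd ℂ) (permOn (fun k l => Z k l ω) K' L') ∂μ
      = ∑ e : K ≃ L, ∑ f : K' ≃ L', ∫ ω, (∏ p ∈ graphFinset e, Z p.1 p.2 ω) *
          conj (∏ p ∈ graphFinset f, Z p.1 p.2 ω) ∂μ := by
        simp_rw [permOn_mul_conj_permOn]
        rw [integral_finsetSum _ fun e _ ↦ integrable_finsetSum _ fun f _ ↦ hint _ _]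
        exact sum_congr rfl fun e _ ↦ integral_finsetSum _ fun f _ ↦ hint _ _
    _ = ∑ e : K ≃ L, ∑ f : K' ≃ L',
          if graphFinset e = graphFinset f then ((1 / (M : ℝ) : ℝ) : ℂ) ^ n else 0 := by
        simp only [integral_prod_mul_conj_prod hindep hL2' (fun p ↦ hmean p.1 p.2)
          (fun p ↦ hvar p.1 p.2), card_graphFinset, hK]
    _ = _ := by
        rw [sum_sum_ite_graphFinset_eq (hK.trans hL.symm), hK]
        exact if_congr hcond (by push_cast; ring) rfl

/-- **Second moments of permanents of submatrices of a random matrix.**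
If `(Z k l)` are mutually independent square-integrable complex random variables with
`E[Z k l] = 0` and `E[|Z k l|²] = 1/M`, and `K, L, K', L'` are subsets of `{1,…,M}`
with `|K| = |L| = n` and `|K'| = |L'| = m`, then
`E[per Z(K|L) · conj(per Z(K'|L'))]` equals `n!/Mⁿ` if `n = m`, `K = K'` and `L = L'`,
and equals `0` otherwise. -/
theorem expectation_permanent_product
    {Ω : Type*} [MeasurableSpace Ω] (μ : Measure Ω) [IsProbabilityMeasure μ]
    (M : ℕ) (Z : Fin M → Fin M → Ω → ℂ)
    (hindep : iIndepFun
      (fun p : Fin M × Fin M => Z p.1 p.2) μ)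
    (hL2 : ∀ k l, MemLp (Z k l) 2 μ)
    (hmean : ∀ k l, ∫ ω, Z k l ω ∂μ = 0)
    (hvar : ∀ k l, ∫ ω, ‖Z k l ω‖ ^ 2 ∂μ = 1 / (M : ℝ))
    (n m : ℕ) (K L K' L' : Finset (Fin M))
    (hK : K.card = n) (hL : L.card = n) (hK' : K'.card = m) (hL' : L'.card = m) :
    ∫ ω, permOn (fun k l => Z k l ω) K L *
        (starRingEnd ℂ) (permOn (fun k l => Z k l ω) K' L') ∂μ =
      if n = m ∧ K = K' ∧ L = L' then (n.factorial : ℂ) / (M : ℂ) ^ n else 0 :=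
  expectation_permanent_product_general μ M Z hindep hL2 hmean hvar n m K L K' L' hK hL hK'
end

section
/- For every natural number n: Σ_{τ ∈ S_n} 2^{fix(τ)} = Σ_{k=0}^{n} n!/k!. -/
open Finset

/-- The number of fixed points of a permutation. -/
def fixCount {n : ℕ} (τ : Equiv.Perm (Fin n)) : ℕ :=
  (Finset.univ.filter fun i => τ i = i).card

/-- The number of permutations of `Fin n` fixing a given set `S` pointwise is `(n - |S|)!`. -/
lemma card_fixing (n : ℕ) (S : Finset (Fin n)) :
    ((univ : Finset (Equiv.Perm (Fin n))).filter fun τ => ∀ i ∈ S, τ i = i).card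
      = (n - S.card).factorial := by
  classical
  have e : Equiv.Perm {x : Fin n // x ∉ S} ≃ {τ : Equiv.Perm (Fin n) // ∀ i ∈ S, τ i = i} :=
    (Equiv.Perm.subtypeEquivSubtypePerm (fun x => x ∉ S)).trans
      (Equiv.subtypeEquivRight (by
        intro f
        constructor
        · intro h i hi; exact h i (by simpa using hi)
        · intro h a ha; exact h a (by simpa using ha)))
  have hcard : Fintype.card {x : Fin n // x ∉ S} = n - S.card := by
    simp [Fintype.card_subtype_compl]
  calc ((univ : Finset (Equiv.Perm (Fin n))).filter fun τ => ∀ i ∈ S, τ i = i).card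
      = Fintype.card {τ : Equiv.Perm (Fin n) // ∀ i ∈ S, τ i = i} :=
        (Fintype.card_subtype _).symm
    _ = Fintype.card (Equiv.Perm {x : Fin n // x ∉ S}) := (Fintype.card_congr e).symm
    _ = (n - S.card).factorial := by rw [Fintype.card_perm, hcard]

/-- **The quantity `χ(n)`.**  For every natural number `n`,
`Σ_{τ ∈ S_n} 2^{fix(τ)} = Σ_{k=0}^{n} n!/k!`  (note `k! ∣ n!` for `k ≤ n`, so the
natural-number divisions on the right are exact). -/
theorem sum_two_pow_fixed_points (n : ℕ) :
    ∑ τ : Equiv.Perm (Fin n), 2 ^ fixCount τ =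
      ∑ k ∈ Finset.range (n + 1), n.factorial / k.factorial := by
  classical
  have h1 : ∀ τ : Equiv.Perm (Fin n), 2 ^ fixCount τ =
      ∑ S ∈ (univ : Finset (Fin n)).powerset, if ∀ i ∈ S, τ i = i then 1 else 0 := by
    intro τ
    rw [← Finset.card_filter]
    have : ((univ : Finset (Fin n)).powerset.filter fun S => ∀ i ∈ S, τ i = i)
        = (univ.filter fun i => τ i = i).powerset := by
      ext S
      simp [Finset.subset_iff]
    rw [this, Finset.card_powerset, fixCount]
  calc ∑ τ : Equiv.Perm (Fin n), 2 ^ fixCount τ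
      = ∑ τ : Equiv.Perm (Fin n), ∑ S ∈ (univ : Finset (Fin n)).powerset,
          if ∀ i ∈ S, τ i = i then 1 else 0 := Finset.sum_congr rfl fun τ _ => h1 τ
    _ = ∑ S ∈ (univ : Finset (Fin n)).powerset, ∑ τ : Equiv.Perm (Fin n),
          if ∀ i ∈ S, τ i = i then 1 else 0 := Finset.sum_comm
    _ = ∑ S ∈ (univ : Finset (Fin n)).powerset, (n - S.card).factorial := by
        refine Finset.sum_congr rfl fun S _ => ?_
        rw [← Finset.card_filter, card_fixing]
    _ = ∑ k ∈ Finset.range (n + 1), ∑ S ∈ Finset.powersetCard k (univ : Finset (Fin n)),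
          (n - S.card).factorial := by
        rw [Finset.sum_powerset]
        simp
    _ = ∑ k ∈ Finset.range (n + 1), n.choose k * (n - k).factorial := by
        refine Finset.sum_congr rfl fun k hk => ?_
        rw [Finset.sum_congr rfl (fun S hS => by
          rw [(Finset.mem_powersetCard.1 hS).2]), Finset.sum_const, Finset.card_powersetCard,
          Finset.card_univ, Fintype.card_fin, smul_eq_mul]
    _ = ∑ k ∈ Finset.range (n + 1), n.factorial / k.factorial := by
        refine Finset.sum_congr rfl fun k hk => ?_
        have hkn : k ≤ n := Nat.lt_succ_iff.1 (Finset.mem_range.1 hk)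
        symm
        apply Nat.div_eq_of_eq_mul_left (Nat.factorial_pos k)
        rw [← Nat.choose_mul_factorial_mul_factorial hkn]
        ring
end
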